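/- Let k ≥ 1 be an integer, set b = 32k + 16, let Z₁, …, Z_b be i.i.d. random variables each uniformly distributed on {1, …, b}, let B ⊆ {1, …, b} be a subset with |B| = b/2, and let Y be the number of indices i ∈ B such that Zⱼ ≠ i for every j ∈ {1, …, b}. Then Pr[Y > 3b/8] < 4/9, and consequently Pr[b/2 − Y > 4k + 2] > 5/9, i.e. with probability greater than 5/9 more than 4k+2 of the blocks in B contain at least one of the points Z₁, …, Z_b. -/

import Mathlib

/-!
Let `A i` be the event that block `i` stays empty. By independence and uniformity
`P(A i) = (1 - 1/b)^b ≤ e⁻¹` and `P(A i ∩ A j) = (1 - 2/b)^b ≤ e⁻²` for `i ≠ j`, so the number `Y`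
of empty blocks of `B` has second moment `E[Y²] ≤ |B| e⁻¹ + |B|² e⁻²`. Markov's inequality for `Y²`
at the threshold `3b/8` then gives `P(Y ≥ 3b/8) < 4/9`, and the second claim is the complementary
event.
-/

open MeasureTheory ProbabilityTheory
open scoped Finset ENNReal

theorem ENNReal.one_sub_div_pow_le_exp_neg {n s : ℕ} (hs : s ≤ n) :
    (1 - s / n : ℝ≥0∞) ^ n ≤ ENNReal.ofReal (Real.exp (-s)) := by
  have hsn : (s : ℝ) / n ≤ 1 := div_le_one_of_le₀ (by exact_mod_cast hs) n.cast_nonneg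
  obtain rfl | hn := n.eq_zero_or_pos
  · simp [Nat.le_zero.mp hs]
  have hconv : (1 - s / n : ℝ≥0∞) = ENNReal.ofReal (1 - s / n) := by
    rw [ENNReal.ofReal_sub _ (by positivity), ENNReal.ofReal_one,
      ENNReal.ofReal_div_of_pos (by exact_mod_cast hn), ENNReal.ofReal_natCast,
      ENNReal.ofReal_natCast]
  rw [hconv, ← ENNReal.ofReal_pow (by linarith)]
  exact ENNReal.ofReal_le_ofReal (Real.one_sub_div_pow_le_exp_neg (by exact_mod_cast hs))

section Uniform

variable {Ω ι α : Type*} [MeasurableSpace Ω] {μ : Measure Ω}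
  [Fintype α] [MeasurableSpace α] [MeasurableSingletonClass α]

theorem measure_preimage_finset_of_uniform {X : Ω → α} (hX : Measurable X)
    (hunif : ∀ a, μ (X ⁻¹' {a}) = (Fintype.card α : ℝ≥0∞)⁻¹) (S : Finset α) :
    μ (X ⁻¹' S) = #S / Fintype.card α := by
  rw [← sum_measure_preimage_singleton S fun a _ => hX (measurableSet_singleton a)]
  simp [hunif, div_eq_mul_inv]

theorem measure_forall_notMem_of_iIndepFun_uniform [IsProbabilityMeasure μ] [Fintype ι]
    {Z : ι → Ω → α} (hZ : ∀ j, Measurable (Z j))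
    (hunif : ∀ j a, μ (Z j ⁻¹' {a}) = (Fintype.card α : ℝ≥0∞)⁻¹)
    (hindep : iIndepFun Z μ) (S : Finset α) :
    μ {ω | ∀ j, Z j ω ∉ S} = (1 - #S / Fintype.card α) ^ Fintype.card ι := by
  have hS : MeasurableSet ((S : Set α)ᶜ) := (Set.toFinite _).measurableSet
  have hset : {ω | ∀ j, Z j ω ∉ S} = ⋂ j, Z j ⁻¹' (S : Set α)ᶜ := by ext; simp
  rw [hset, hindep.meas_iInter fun j => ⟨_, hS, rfl⟩]
  have hj : ∀ j, μ (Z j ⁻¹' (S : Set α)ᶜ) = 1 - #S / Fintype.card α := fun j => by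
    rw [Set.preimage_compl, prob_compl_eq_one_sub (hZ j S.measurableSet),
      measure_preimage_finset_of_uniform (hZ j) (hunif j)]
  rw [Finset.prod_congr rfl fun j _ => hj j, Finset.prod_const, Finset.card_univ]

theorem measure_forall_notMem_le_exp_neg_card [IsProbabilityMeasure μ] {n : ℕ}
    {Z : Fin n → Ω → Fin n} (hZ : ∀ j, Measurable (Z j))
    (hunif : ∀ j a, μ (Z j ⁻¹' {a}) = (n : ℝ≥0∞)⁻¹) (hindep : iIndepFun Z μ)
    (S : Finset (Fin n)) :
    μ {ω | ∀ j, Z j ω ∉ S} ≤ ENNReal.ofReal (Real.exp (-#S)) := by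
  rw [measure_forall_notMem_of_iIndepFun_uniform hZ (by simpa using hunif) hindep S,
    Fintype.card_fin]
  exact ENNReal.one_sub_div_pow_le_exp_neg (by simpa using S.card_le_univ)

theorem measure_forall_ne_le_exp_neg_one [IsProbabilityMeasure μ] {n : ℕ}
    {Z : Fin n → Ω → Fin n} (hZ : ∀ j, Measurable (Z j))
    (hunif : ∀ j a, μ (Z j ⁻¹' {a}) = (n : ℝ≥0∞)⁻¹) (hindep : iIndepFun Z μ) (a : Fin n) :
    μ {ω | ∀ j, Z j ω ≠ a} ≤ ENNReal.ofReal (Real.exp (-1)) := by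
  simpa using measure_forall_notMem_le_exp_neg_card hZ hunif hindep {a}

theorem measure_forall_ne_inter_le_exp_neg_two [IsProbabilityMeasure μ] {n : ℕ}
    {Z : Fin n → Ω → Fin n} (hZ : ∀ j, Measurable (Z j))
    (hunif : ∀ j a, μ (Z j ⁻¹' {a}) = (n : ℝ≥0∞)⁻¹) (hindep : iIndepFun Z μ) {a a' : Fin n}
    (hne : a ≠ a') :
    μ {ω | (∀ j, Z j ω ≠ a) ∧ ∀ j, Z j ω ≠ a'} ≤ ENNReal.ofReal (Real.exp (-2)) := by
  convert measure_forall_notMem_le_exp_neg_card hZ hunif hindep {a, a'} using 3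
  · ext ω; simp [forall_and]
  · simp [Finset.card_pair hne]

end Uniform

theorem measurableSet_forall_ne {Ω ι α : Type*} [MeasurableSpace Ω] [MeasurableSpace α]
    [MeasurableSingletonClass α] [Countable ι] {Z : ι → Ω → α} (hZ : ∀ j, Measurable (Z j))
    (a : α) : MeasurableSet {ω | ∀ j, Z j ω ≠ a} := by
  rw [Set.ofPred_forall]
  exact .iInter fun j => hZ j (measurableSet_singleton a).compl

section SecondMoment

variable {Ω ι : Type*} (B : Finset ι) {P : ι → Ω → Prop} [∀ i ω, Decidable (P i ω)]

theorem natCast_card_filter_eq_sum_indicator (ω : Ω) :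
    (#{i ∈ B | P i ω} : ℝ≥0∞) = ∑ i ∈ B, {ω | P i ω}.indicator 1 ω := by
  simp only [Finset.card_filter, Nat.cast_sum, Nat.cast_ite, Nat.cast_one, Nat.cast_zero,
    Set.indicator_apply, Set.mem_ofPred_eq, Pi.one_apply]

variable [MeasurableSpace Ω] {μ : Measure Ω}

theorem lintegral_natCast_card_filter_sq (hP : ∀ i, MeasurableSet {ω | P i ω}) :
    ∫⁻ ω, (#{i ∈ B | P i ω} : ℝ≥0∞) ^ 2 ∂μ = ∑ i ∈ B, ∑ j ∈ B, μ {ω | P i ω ∧ P j ω} := by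
  have hPP : ∀ i j, MeasurableSet {ω | P i ω ∧ P j ω} := fun i j => (hP i).inter (hP j)
  have hmul : ∀ i j ω, {ω | P i ω}.indicator (1 : Ω → ℝ≥0∞) ω * {ω | P j ω}.indicator 1 ω =
      {ω | P i ω ∧ P j ω}.indicator 1 ω := fun i j ω =>
    (congrFun Set.inter_indicator_one ω).symm
  simp_rw [natCast_card_filter_eq_sum_indicator, sq, Finset.sum_mul_sum, hmul]
  rw [lintegral_finsetSum _ fun i _ =>
    Finset.measurable_sum _ fun j _ => measurable_one.indicator (hPP i j)]
  refine Finset.sum_congr rfl fun i _ => ?_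
  rw [lintegral_finsetSum _ fun j _ => measurable_one.indicator (hPP i j)]
  exact Finset.sum_congr rfl fun j _ => lintegral_indicator_one (hPP i j)

theorem lintegral_natCast_card_filter_sq_le (hP : ∀ i, MeasurableSet {ω | P i ω})
    {p q : ℝ≥0∞} (hp : ∀ i ∈ B, μ {ω | P i ω} ≤ p)
    (hq : ∀ i ∈ B, ∀ j ∈ B, i ≠ j → μ {ω | P i ω ∧ P j ω} ≤ q) :
    ∫⁻ ω, (#{i ∈ B | P i ω} : ℝ≥0∞) ^ 2 ∂μ ≤ #B * p + #B ^ 2 * q := by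
  classical
  have hrow : ∀ i ∈ B, ∑ j ∈ B, μ {ω | P i ω ∧ P j ω} ≤ p + #B * q := by
    intro i hi
    rw [← Finset.add_sum_erase _ _ hi]
    gcongr
    · simpa using hp i hi
    · calc ∑ j ∈ B.erase i, μ {ω | P i ω ∧ P j ω}
          ≤ ∑ j ∈ B.erase i, q := Finset.sum_le_sum fun j hj =>
            hq i hi j (Finset.mem_of_mem_erase hj) (Finset.ne_of_mem_erase hj).symm
        _ ≤ #B * q := by
            rw [Finset.sum_const, nsmul_eq_mul]
            gcongr
            exact Finset.erase_subset i B
  calc ∫⁻ ω, (#{i ∈ B | P i ω} : ℝ≥0∞) ^ 2 ∂μ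
      = ∑ i ∈ B, ∑ j ∈ B, μ {ω | P i ω ∧ P j ω} := lintegral_natCast_card_filter_sq B hP
    _ ≤ ∑ _i ∈ B, (p + #B * q) := Finset.sum_le_sum hrow
    _ = #B * p + #B ^ 2 * q := by rw [Finset.sum_const, nsmul_eq_mul]; ring

theorem sq_mul_measure_le_card_filter_le (hP : ∀ i, MeasurableSet {ω | P i ω})
    {p q : ℝ≥0∞} (hp : ∀ i ∈ B, μ {ω | P i ω} ≤ p)
    (hq : ∀ i ∈ B, ∀ j ∈ B, i ≠ j → μ {ω | P i ω ∧ P j ω} ≤ q) (t : ℕ) :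
    (t : ℝ≥0∞) ^ 2 * μ {ω | t ≤ #{i ∈ B | P i ω}} ≤ #B * p + #B ^ 2 * q := by
  have hmeas : Measurable fun ω => (#{i ∈ B | P i ω} : ℝ≥0∞) ^ 2 := by
    simp_rw [natCast_card_filter_eq_sum_indicator]
    exact (Finset.measurable_sum _ fun i _ => measurable_one.indicator (hP i)).pow_const 2
  have hset : {ω | t ≤ #{i ∈ B | P i ω}} =
      {ω | (t : ℝ≥0∞) ^ 2 ≤ (#{i ∈ B | P i ω} : ℝ≥0∞) ^ 2} := by
    ext ω
    simp only [Set.mem_ofPred_eq]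
    norm_cast
    exact (Nat.pow_le_pow_iff_left two_ne_zero).symm
  rw [hset]
  exact (mul_meas_ge_le_lintegral₀ hmeas.aemeasurable _).trans
    (lintegral_natCast_card_filter_sq_le B hP hp hq)

theorem measure_le_card_filter_lt (hP : ∀ i, MeasurableSet {ω | P i ω}) {p q : ℝ}
    (hp₀ : 0 ≤ p) (hq₀ : 0 ≤ q) (hp : ∀ i ∈ B, μ {ω | P i ω} ≤ ENNReal.ofReal p)
    (hq : ∀ i ∈ B, ∀ j ∈ B, i ≠ j → μ {ω | P i ω ∧ P j ω} ≤ ENNReal.ofReal q)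
    {t : ℕ} {r : ℝ≥0∞} (hr : r ≠ ⊤) (hlt : #B * p + #B ^ 2 * q < t ^ 2 * r.toReal) :
    μ {ω | t ≤ #{i ∈ B | P i ω}} < r := by
  by_contra! h
  have hle := (mul_le_mul_right h ((t : ℝ≥0∞) ^ 2)).trans
    (sq_mul_measure_le_card_filter_le B hP hp hq t)
  rw [← ENNReal.toReal_le_toReal (by finiteness) (by finiteness),
    ENNReal.toReal_add (by finiteness) (by finiteness)] at hle
  simp only [ENNReal.toReal_mul, ENNReal.toReal_pow, ENNReal.toReal_natCast,
    ENNReal.toReal_ofReal hp₀, ENNReal.toReal_ofReal hq₀] at hle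
  exact hle.not_gt hlt

end SecondMoment

theorem lt_measure_compl_of_add_lt_one {Ω : Type*} [MeasurableSpace Ω] {μ : Measure Ω}
    [IsProbabilityMeasure μ] {s : Set Ω} {c : ℝ≥0∞} (h : μ s + c < 1) : c < μ sᶜ := by
  by_contra! hc
  have hcover : 1 ≤ μ s + μ sᶜ := by
    rw [← measure_univ (μ := μ), ← Set.union_compl_self s]
    exact measure_union_le s sᶜ
  exact (hcover.trans (by gcongr)).not_gt h

theorem Real.exp_neg_two_lt_one_div_seven : Real.exp (-2) < 1 / 7 := by
  rw [show (-2 : ℝ) = (2 : ℕ) * -1 by norm_num, Real.exp_nat_mul]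
  nlinarith [Real.exp_neg_one_lt_d9, Real.exp_pos (-1)]

theorem mul_exp_neg_one_add_sq_mul_exp_neg_two_lt {u : ℝ} (hu : 1 ≤ u) :
    8 * u * Real.exp (-1) + (8 * u) ^ 2 * Real.exp (-2) < (6 * u) ^ 2 * (4 / 9) := by
  nlinarith [Real.exp_neg_one_lt_half, Real.exp_neg_two_lt_one_div_seven]

theorem slotting_chebyshev_general {Ω : Type*} [MeasurableSpace Ω] (μ : Measure Ω)
    [IsProbabilityMeasure μ] (k : ℕ) (b : ℕ) (hb : b = 32 * k + 16)
    (Z : Fin b → Ω → Fin b) (hmeas : ∀ j, Measurable (Z j))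
    (hunif : ∀ j i, μ (Z j ⁻¹' {i}) = (b : ENNReal)⁻¹)
    (hindep : iIndepFun Z μ)
    (B : Finset (Fin b)) (hB : B.card = b / 2) :
    μ {ω | 3 * (b : ℝ) / 8 < ((B.filter (fun i => ∀ j, Z j ω ≠ i)).card : ℝ)} <
        (4 : ENNReal) / 9 ∧
      (5 : ENNReal) / 9 <
        μ {ω | 4 * (k : ℝ) + 2 <
          (b : ℝ) / 2 - ((B.filter (fun i => ∀ j, Z j ω ≠ i)).card : ℝ)} := by
  have hM : μ {ω | 12 * k + 6 ≤ #{i ∈ B | ∀ j, Z j ω ≠ i}} < 4 / 9 := by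
    refine measure_le_card_filter_lt B (measurableSet_forall_ne hmeas) (Real.exp_pos _).le
      (Real.exp_pos _).le (fun i _ => measure_forall_ne_le_exp_neg_one hmeas hunif hindep i)
      (fun i _ i' _ => measure_forall_ne_inter_le_exp_neg_two hmeas hunif hindep)
      (by finiteness) ?_
    rw [hB, show b / 2 = 16 * k + 8 by omega]
    have h := mul_exp_neg_one_add_sq_mul_exp_neg_two_lt (u := 2 * k + 1)
      (by linarith [k.cast_nonneg (α := ℝ)])
    norm_num [ENNReal.toReal_div]
    linarith
  have hthreshold : (3 * b / 8 : ℝ) = (12 * k + 6 : ℕ) ∧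
      (b / 2 - (4 * k + 2) : ℝ) = (12 * k + 6 : ℕ) := by
    subst hb; push_cast; constructor <;> ring
  constructor
  · refine (measure_mono fun ω hω => ?_).trans_lt hM
    rw [Set.mem_ofPred_eq, hthreshold.1] at hω
    exact_mod_cast hω.le
  · have hcompl : {ω | 4 * (k : ℝ) + 2 < (b : ℝ) / 2 - (#{i ∈ B | ∀ j, Z j ω ≠ i} : ℝ)} =
        {ω | 12 * k + 6 ≤ #{i ∈ B | ∀ j, Z j ω ≠ i}}ᶜ := by
      ext ω
      rw [Set.mem_compl_iff, Set.mem_ofPred_eq, Set.mem_ofPred_eq, not_le, lt_sub_comm,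
        hthreshold.2]
      norm_cast
    rw [hcompl]
    refine lt_measure_compl_of_add_lt_one ?_
    calc _ < 4 / 9 + 5 / 9 := ENNReal.add_lt_add_right (by finiteness) hM
      _ = 1 := by norm_num [ENNReal.div_add_div_same, ENNReal.div_self]

/-- For `b = 32k+16` points thrown i.i.d. uniformly into `b` blocks, with
probability `> 5/9` more than `4k+2` of the `b/2` designated blocks are occupied
(equivalently, the number `Y` of empty designated blocks satisfies `Pr[Y > 3b/8] < 4/9`). -/
theorem slotting_chebyshev {Ω : Type*} [MeasurableSpace Ω] (μ : Measure Ω)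
    [IsProbabilityMeasure μ] (k : ℕ) (hk : 1 ≤ k) (b : ℕ) (hb : b = 32 * k + 16)
    (Z : Fin b → Ω → Fin b) (hmeas : ∀ j, Measurable (Z j))
    (hunif : ∀ j i, μ (Z j ⁻¹' {i}) = (b : ENNReal)⁻¹)
    (hindep : iIndepFun Z μ)
    (B : Finset (Fin b)) (hB : B.card = b / 2) :
    μ {ω | 3 * (b : ℝ) / 8 < ((B.filter (fun i => ∀ j, Z j ω ≠ i)).card : ℝ)} <
        (4 : ENNReal) / 9 ∧
      (5 : ENNReal) / 9 <
        μ {ω | 4 * (k : ℝ) + 2 <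
          (b : ℝ) / 2 - ((B.filter (fun i => ∀ j, Z j ω ≠ i)).card : ℝ)} :=
  slotting_chebyshev_general μ k b hb Z hmeas hunif hindep B hB
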